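/- Let R be an Ore domain with valuation υ : R → G ∪ {∞} for an ordered group (G,<), and let D = Q_cl(R) be its Ore division ring of fractions with the extended valuation. Then the localization of gr_υ(R) at its set H of nonzero homogeneous elements is isomorphic as a G-graded ring to gr_υ(D), via f + R_{>υ(f)} ↦ f + D_{>υ(f)} for f ∈ R. -/

import Mathlib

/-!
`gr_υ(R)` is a quotient of `⨁_g R_{≥g}`. Since `υ` on `R` is the restriction of `υ` on `D`,
the filtration of `R` is the preimage of that of `D`, so an element of `R_{≥g}` lies in
`R_{>g}` iff its image lies in `D_{>g}`. Hence `⨁_g R_{≥g} → gr_υ(R)` and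
`⨁_g R_{≥g} → ⨁_g D_{≥g} → gr_υ(D)` have the same kernel, and `f + R_{>g} ↦ f + D_{>g}` is a
well-defined injective graded ring homomorphism. By the Ore condition, finitely many elements
of `D` have a common left denominator `s ∈ R`, and `(s + D_{>υ(s)}) (d + D_{>g}) =
s d + D_{>υ(s) g}` with `s d ∈ R`, which exhibits every element of `gr_υ(D)` as a left fraction
with homogeneous denominator `s + R_{>υ(s)}`.
-/

/-- An abstract characterization of the associated graded ring of a valuation filtration
(see Statement 3 for explanation of the fields). -/
structure IsAssociatedGradedRing (R : Type) [Ring R] (G : Type) [Group G] [LinearOrder G]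
    (F : G → Set R) (A : Type) [Ring A] (φ : G → R → A) : Prop where
  map_add : ∀ g : G, ∀ x y : R, x ∈ F g → y ∈ F g → φ g (x + y) = φ g x + φ g y
  zero_iff : ∀ g : G, ∀ x : R, x ∈ F g → (φ g x = 0 ↔ (x = 0 ∨ ∃ h > g, x ∈ F h))
  map_mul : ∀ g h : G, ∀ x y : R, x ∈ F g → y ∈ F h → φ g x * φ h y = φ (g * h) (x * y)
  map_one : φ 1 1 = 1
  gen : AddSubgroup.closure (⋃ g : G, φ g '' F g) = (⊤ : AddSubgroup A)
  indep : ∀ (s : Finset G) (c : G → R), (∀ g ∈ s, c g ∈ F g) →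
    (∑ g ∈ s, φ g (c g)) = 0 → ∀ g ∈ s, φ g (c g) = 0

open DirectSum Function

namespace IsAssociatedGradedRing

variable {R : Type} [Ring R] {G : Type} [Group G] [LinearOrder G] {F : G → AddSubgroup R}
  {A : Type} [Ring A] {φ : G → R → A}

def gradedSum (hA : IsAssociatedGradedRing R G (fun g => F g) A φ) : (⨁ g, F g) →+ A :=
  toAddMonoid fun g => AddMonoidHom.mk' (fun x => φ g x) fun x y => hA.map_add g x y x.2 y.2

theorem gradedSum_of (hA : IsAssociatedGradedRing R G (fun g => F g) A φ) (g : G) (x : F g) :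
    hA.gradedSum (of _ g x) = φ g x :=
  toAddMonoid_of _ _ _

theorem apply_zero (hA : IsAssociatedGradedRing R G (fun g => F g) A φ) (g : G) :
    φ g 0 = 0 := by
  simpa using (hA.gradedSum_of g 0).symm

theorem gradedSum_surjective (hA : IsAssociatedGradedRing R G (fun g => F g) A φ) :
    Surjective hA.gradedSum := by
  rw [← AddMonoidHom.range_eq_top, eq_top_iff, ← hA.gen, AddSubgroup.closure_le]
  rintro _ ⟨_, ⟨g, rfl⟩, x, hx, rfl⟩
  exact ⟨of _ g ⟨x, hx⟩, hA.gradedSum_of g ⟨x, hx⟩⟩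

open Classical in
theorem gradedSum_apply (hA : IsAssociatedGradedRing R G (fun g => F g) A φ) (v : ⨁ g, F g) :
    hA.gradedSum v = ∑ g ∈ v.support, φ g (v g) := by
  simp only [gradedSum, toAddMonoid, DFinsupp.liftAddHom_apply]
  rw [DFinsupp.sumAddHom_apply]
  rfl

theorem gradedSum_eq_zero_iff (hA : IsAssociatedGradedRing R G (fun g => F g) A φ) (v : ⨁ g, F g) :
    hA.gradedSum v = 0 ↔ ∀ g, φ g (v g) = 0 := by
  classical
  rw [hA.gradedSum_apply]
  refine ⟨fun h g => ?_, fun h => Finset.sum_eq_zero fun g _ => h g⟩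
  by_cases hg : g ∈ v.support
  · exact hA.indep v.support (fun g => v g) (fun g _ => (v g).2) h g hg
  · rw [DFinsupp.notMem_support_iff.1 hg]
    exact hA.apply_zero g

theorem exists_sum_eq (hA : IsAssociatedGradedRing R G (fun g => F g) A φ) (a : A) :
    ∃ (s : Finset G) (c : G → R), (∀ g, c g ∈ F g) ∧ a = ∑ g ∈ s, φ g (c g) := by
  classical
  obtain ⟨v, rfl⟩ := hA.gradedSum_surjective a
  exact ⟨v.support, fun g => v g, fun g => (v g).2, hA.gradedSum_apply v⟩

theorem map_mul_of_map_mul_homogeneous (hA : IsAssociatedGradedRing R G (fun g => F g) A φ)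
    {B : Type} [Ring B] (Λ : A →+ B)
    (hΛ : ∀ g h x y, x ∈ F g → y ∈ F h → Λ (φ g x * φ h y) = Λ (φ g x) * Λ (φ h y))
    (a b : A) : Λ (a * b) = Λ a * Λ b := by
  obtain ⟨v, rfl⟩ := hA.gradedSum_surjective a
  obtain ⟨w, rfl⟩ := hA.gradedSum_surjective b
  induction v using DirectSum.induction_on with
  | zero => simp only [map_zero, zero_mul]
  | add v v' hv hv' => simp only [_root_.map_add, add_mul, hv, hv']
  | of g x =>
    induction w using DirectSum.induction_on with
    | zero => simp only [map_zero, mul_zero]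
    | add w w' hw hw' => simp only [_root_.map_add, mul_add, hw, hw']
    | of h y => simpa only [gradedSum_of] using hΛ g h x y x.2 y.2

variable {D B : Type} [Ring D] [Ring B] {F' : G → AddSubgroup D} {ψ : G → D → B}

theorem apply_map_eq_zero_iff (hA : IsAssociatedGradedRing R G (fun g => F g) A φ)
    (hB : IsAssociatedGradedRing D G (fun g => F' g) B ψ)
    {f : R →+* D} (hf : Injective f) (hF : ∀ g x, x ∈ F g ↔ f x ∈ F' g)
    {g : G} {x : R} (hx : x ∈ F g) : ψ g (f x) = 0 ↔ φ g x = 0 := by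
  rw [hA.zero_iff g x hx, hB.zero_iff g (f x) ((hF g x).1 hx), map_eq_zero_iff f hf]
  simp only [SetLike.mem_coe, hF]

theorem exists_injective_ringHom (hA : IsAssociatedGradedRing R G (fun g => F g) A φ)
    (hB : IsAssociatedGradedRing D G (fun g => F' g) B ψ)
    (f : R →+* D) (hf : Injective f) (hF : ∀ g x, x ∈ F g ↔ f x ∈ F' g)
    (hone : (1 : D) ∈ F' 1) (hmul : ∀ g h x y, x ∈ F' g → y ∈ F' h → x * y ∈ F' (g * h)) :
    ∃ Λ : A →+* B, Injective Λ ∧ ∀ g x, x ∈ F g → Λ (φ g x) = ψ g (f x) := by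
  let fF : ∀ g, F g →+ F' g := fun g =>
    (f.toAddMonoidHom.comp (F g).subtype).codRestrict _ fun x => (hF g x).1 x.2
  let Ψ := hB.gradedSum.comp (DirectSum.map fF)
  have hker : ∀ v, Ψ v = 0 ↔ hA.gradedSum v = 0 := fun v => by
    rw [AddMonoidHom.comp_apply, hB.gradedSum_eq_zero_iff, hA.gradedSum_eq_zero_iff]
    exact forall_congr' fun g => hA.apply_map_eq_zero_iff hB hf hF (v g).2
  let Λ := hA.gradedSum.liftOfSurjective hA.gradedSum_surjective
    ⟨Ψ, fun v hv => (hker v).2 hv⟩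
  have hΛ : ∀ v, Λ (hA.gradedSum v) = Ψ v := fun v => by simp [Λ]
  have hΛφ : ∀ g x, x ∈ F g → Λ (φ g x) = ψ g (f x) := fun g x hx => by
    rw [← hA.gradedSum_of g ⟨x, hx⟩, hΛ]
    simp [Ψ, fF, gradedSum_of]
  have hF1 : (1 : R) ∈ F 1 := (hF 1 1).2 (by simpa using hone)
  have hFmul : ∀ g h x y, x ∈ F g → y ∈ F h → x * y ∈ F (g * h) := fun g h x y hx hy =>
    (hF _ _).2 (by simpa using hmul g h _ _ ((hF g x).1 hx) ((hF h y).1 hy))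
  refine ⟨{ Λ with
    map_one' := by
      change Λ 1 = 1
      rw [← hA.map_one, hΛφ 1 1 hF1, _root_.map_one, hB.map_one]
    map_mul' := hA.map_mul_of_map_mul_homogeneous Λ fun g h x y hx hy => by
      rw [hA.map_mul g h x y hx hy, hΛφ g x hx, hΛφ h y hy, hΛφ _ _ (hFmul g h x y hx hy),
        _root_.map_mul, hB.map_mul g h _ _ ((hF g x).1 hx) ((hF h y).1 hy)] }, ?_, hΛφ⟩
  refine (injective_iff_map_eq_zero Λ).2 fun a ha => ?_
  obtain ⟨v, rfl⟩ := hA.gradedSum_surjective a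
  exact (hker v).1 (by rwa [← hΛ])

end IsAssociatedGradedRing

theorem eq_one_of_mul_self_eq_one {G : Type} [Monoid G] [LinearOrder G] [MulLeftStrictMono G]
    {a : G} (h : a * a = 1) : a = 1 := by
  rcases lt_trichotomy a 1 with ha | ha | ha
  · exact absurd h (Left.mul_lt_one ha ha).ne
  · exact ha
  · exact absurd h (Left.one_lt_mul ha ha).ne'

/-- A valuation `K → G ∪ {∞}`, recorded by its values on nonzero elements only (`υ 0` is junk). -/
structure IsNonzeroValuation {K : Type} [Ring K] {G : Type} [Group G] [LinearOrder G]
    (υ : K → G) : Prop where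
  min_le_map_add : ∀ x y : K, x ≠ 0 → y ≠ 0 → x + y ≠ 0 → min (υ x) (υ y) ≤ υ (x + y)
  map_mul : ∀ x y : K, x ≠ 0 → y ≠ 0 → υ (x * y) = υ x * υ y

namespace IsNonzeroValuation

variable {K : Type} [Ring K] {G : Type} [Group G] [LinearOrder G] {υ : K → G}

theorem map_one [Nontrivial K] (hυ : IsNonzeroValuation υ) : υ 1 = 1 := by
  simpa using (hυ.map_mul 1 1 one_ne_zero one_ne_zero).symm

variable [MulLeftStrictMono G]

theorem map_neg (hυ : IsNonzeroValuation υ) {x : K} (hx : x ≠ 0) : υ (-x) = υ x := by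
  have : Nontrivial K := ⟨⟨x, 0, hx⟩⟩
  have hm1 : υ (-1) = 1 := eq_one_of_mul_self_eq_one <| by
    rw [← hυ.map_mul _ _ (neg_ne_zero.2 one_ne_zero) (neg_ne_zero.2 one_ne_zero), neg_mul_neg,
      one_mul, hυ.map_one]
  rw [← neg_one_mul, hυ.map_mul _ _ (neg_ne_zero.2 one_ne_zero) hx, hm1, one_mul]

def filtration (hυ : IsNonzeroValuation υ) (g : G) : AddSubgroup K where
  carrier := {x | x = 0 ∨ g ≤ υ x}
  zero_mem' := Or.inl rfl
  add_mem' {x y} hx hy := by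
    by_cases hx0 : x = 0
    · simpa [hx0] using hy
    by_cases hy0 : y = 0
    · simpa [hy0] using hx
    by_cases hxy : x + y = 0
    · exact Or.inl hxy
    exact Or.inr ((le_min (hx.resolve_left hx0) (hy.resolve_left hy0)).trans
      (hυ.min_le_map_add x y hx0 hy0 hxy))
  neg_mem' {x} hx := by
    by_cases hx0 : x = 0
    · exact Or.inl (by simp [hx0])
    · exact Or.inr (hυ.map_neg hx0 ▸ hx.resolve_left hx0)

theorem mem_filtration (hυ : IsNonzeroValuation υ) {g : G} {x : K} :
    x ∈ hυ.filtration g ↔ x = 0 ∨ g ≤ υ x :=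
  Iff.rfl

theorem one_mem_filtration [Nontrivial K] (hυ : IsNonzeroValuation υ) :
    (1 : K) ∈ hυ.filtration 1 :=
  Or.inr hυ.map_one.ge

theorem mul_mem_filtration [MulRightMono G] (hυ : IsNonzeroValuation υ) {g h : G} {x y : K}
    (hx : x ∈ hυ.filtration g) (hy : y ∈ hυ.filtration h) : x * y ∈ hυ.filtration (g * h) := by
  by_cases hx0 : x = 0
  · exact Or.inl (by simp [hx0])
  by_cases hy0 : y = 0
  · exact Or.inl (by simp [hy0])
  have := mulLeftMono_of_mulLeftStrictMono G
  exact Or.inr <|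
    hυ.map_mul x y hx0 hy0 ▸ mul_le_mul' (hx.resolve_left hx0) (hy.resolve_left hy0)

theorem apply_valuation_ne_zero (hυ : IsNonzeroValuation υ) {B : Type} [Ring B] {ψ : G → K → B}
    (hB : IsAssociatedGradedRing K G (fun g => hυ.filtration g) B ψ) {x : K} (hx : x ≠ 0) :
    ψ (υ x) x ≠ 0 := by
  rw [ne_eq, hB.zero_iff _ x (Or.inr le_rfl)]
  rintro (rfl | ⟨g, hg, hxg⟩)
  · exact hx rfl
  · exact (hxg.resolve_left hx).not_gt hg

theorem map_mem_filtration_iff (hυ : IsNonzeroValuation υ) {R : Type} [Ring R] {ι : R →+* K}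
    (hι : Injective ι) {υR : R → G} (hext : ∀ x, x ≠ 0 → υ (ι x) = υR x) {g : G} {x : R} :
    ι x ∈ hυ.filtration g ↔ x = 0 ∨ g ≤ υR x := by
  by_cases hx : x = 0
  · simp [hx, zero_mem]
  · rw [mem_filtration, map_eq_zero_iff ι hι, hext x hx]

end IsNonzeroValuation

theorem exists_common_left_multiple {R : Type} [Ring R] [IsDomain R]
    (hOre : ∀ a b : R, b ≠ 0 → ∃ c d : R, d ≠ 0 ∧ d * a = c * b) {α : Type} (t : Finset α)
    (s : α → R) (hs : ∀ i ∈ t, s i ≠ 0) : ∃ m : R, m ≠ 0 ∧ ∀ i ∈ t, ∃ u, m = u * s i := by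
  classical
  induction t using Finset.induction_on with
  | empty => exact ⟨1, one_ne_zero, by simp⟩
  | insert j t _ ih =>
    obtain ⟨m, hm, hu⟩ := ih fun i hi => hs i (Finset.mem_insert_of_mem hi)
    obtain ⟨c, d, hd, hdc⟩ := hOre m (s j) (hs j (Finset.mem_insert_self j t))
    refine ⟨d * m, mul_ne_zero hd hm, fun i hi => ?_⟩
    rcases Finset.mem_insert.1 hi with rfl | hi
    · exact ⟨c, hdc⟩
    · obtain ⟨u, rfl⟩ := hu i hi
      exact ⟨d * u, (mul_assoc d u (s i)).symm⟩

theorem exists_left_mul_eq_map {R D : Type} [Ring R] [IsDomain R] [Ring D]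
    (hOre : ∀ a b : R, b ≠ 0 → ∃ c d : R, d ≠ 0 ∧ d * a = c * b) (ι : R →+* D)
    (hfrac : ∀ d : D, ∃ r s : R, s ≠ 0 ∧ ι s * d = ι r) {α : Type} (t : Finset α) (d : α → D) :
    ∃ s : R, s ≠ 0 ∧ ∀ i ∈ t, ∃ r, ι s * d i = ι r := by
  choose r s hs hsr using fun i => hfrac (d i)
  obtain ⟨m, hm, hu⟩ := exists_common_left_multiple hOre t s fun i _ => hs i
  refine ⟨m, hm, fun i hi => ?_⟩
  obtain ⟨u, rfl⟩ := hu i hi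
  exact ⟨u * r i, by rw [map_mul, mul_assoc, hsr, map_mul]⟩

theorem localized_graded_of_ore_domain_iso_graded_of_fractions_general
    (R : Type) [Ring R] [IsDomain R]
    (hOre : ∀ a b : R, b ≠ 0 → ∃ c d : R, d ≠ 0 ∧ d * a = c * b)
    (G : Type) [Group G] [LinearOrder G]
    [CovariantClass G G (· * ·) (· < ·)]
    [CovariantClass G G (Function.swap (· * ·)) (· < ·)]
    -- the valuation on `R` (restricted to nonzero elements)
    (υR : R → G)
    -- `D`, the Ore division ring of fractions of `R`
    (D : Type) [DivisionRing D] (ι : R →+* D)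
    (hinj : Function.Injective ι)
    (hfrac : ∀ d : D, ∃ r s : R, s ≠ 0 ∧ ι s * d = ι r)
    -- the extended valuation on `D`
    (υD : D → G)
    (haddD : ∀ x y : D, x ≠ 0 → y ≠ 0 → x + y ≠ 0 → min (υD x) (υD y) ≤ υD (x + y))
    (hmulD : ∀ x y : D, x ≠ 0 → y ≠ 0 → υD (x * y) = υD x * υD y)
    (hext : ∀ x : R, x ≠ 0 → υD (ι x) = υR x)
    -- realizations of the associated graded rings of `R` and of `D`
    (A : Type) [Ring A] (φ : G → R → A)
    (hA : IsAssociatedGradedRing R G (fun g => {x : R | x = 0 ∨ g ≤ υR x}) A φ)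
    (B : Type) [Ring B] (ψ : G → D → B)
    (hB : IsAssociatedGradedRing D G (fun g => {x : D | x = 0 ∨ g ≤ υD x}) B ψ) :
    ∃ Λ : A →+* B,
      Function.Injective Λ ∧
      -- `Λ` is the degree-preserving map `f + R_{>υ f} ↦ f + D_{>υ f}`
      (∀ (g : G) (x : R), (x = 0 ∨ g ≤ υR x) → Λ (φ g x) = ψ g (ι x)) ∧
      -- `B` is the Ore localization of `A` at the nonzero homogeneous elements
      (∀ b : B, ∃ h a : A, h ≠ 0 ∧
        (∃ g : G, ∃ x : R, (x = 0 ∨ g ≤ υR x) ∧ h = φ g x) ∧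
        Λ h * b = Λ a) := by
  have hυD : IsNonzeroValuation υD := ⟨haddD, hmulD⟩
  replace hB : IsAssociatedGradedRing D G (fun g => hυD.filtration g) B ψ := hB
  have hF g x : ι x ∈ hυD.filtration g ↔ x = 0 ∨ g ≤ υR x :=
    hυD.map_mem_filtration_iff hinj hext
  let FR g := (hυD.filtration g).comap ι.toAddMonoidHom
  have hFR : (fun g => {x : R | x = 0 ∨ g ≤ υR x}) = fun g => (FR g : Set R) :=
    funext fun g => Set.ext fun x => (hF g x).symm
  rw [hFR] at hA
  have := mulRightMono_of_mulRightStrictMono G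
  obtain ⟨Λ, hΛinj, hΛ⟩ := hA.exists_injective_ringHom hB ι hinj (fun _ _ => Iff.rfl)
    hυD.one_mem_filtration fun _ _ _ _ => hυD.mul_mem_filtration
  refine ⟨Λ, hΛinj, fun g x hx => hΛ g x ((hF g x).2 hx), fun b => ?_⟩
  obtain ⟨t, d, hd, rfl⟩ := hB.exists_sum_eq b
  obtain ⟨s, hs, hr⟩ := exists_left_mul_eq_map hOre ι hfrac t d
  choose! r hr using hr
  have hsF : ι s ∈ hυD.filtration (υR s) := (hF _ s).2 (Or.inr le_rfl)
  have hrF : ∀ g ∈ t, ι (r g) ∈ hυD.filtration (υR s * g) := fun g hg =>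
    hr g hg ▸ hυD.mul_mem_filtration hsF (hd g)
  refine ⟨φ (υR s) s, ∑ g ∈ t, φ (υR s * g) (r g), ?_, ⟨υR s, s, Or.inr le_rfl, rfl⟩, ?_⟩
  · rw [← hΛinj.ne_iff, map_zero, hΛ _ _ hsF, ← hext s hs]
    exact hυD.apply_valuation_ne_zero hB ((map_ne_zero_iff ι hinj).2 hs)
  · rw [map_sum, hΛ _ _ hsF, Finset.mul_sum]
    refine Finset.sum_congr rfl fun g hg => ?_
    rw [hΛ _ _ (hrF g hg), ← hr g hg, hB.map_mul _ _ _ _ hsF (hd g)]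

/-- Let `R` be an Ore domain with valuation `υ : R → G ∪ {∞}` for an
ordered group `(G,<)`, and let `D = Q_cl(R)` be its Ore division ring of fractions with
the extended valuation.  Then the localization of `gr_υ(R)` at its set `H` of nonzero
homogeneous elements is isomorphic as a `G`-graded ring to `gr_υ(D)`, via
`f + R_{>υ(f)} ↦ f + D_{>υ(f)}` for `f ∈ R`.  Concretely: with `(A, φ)` a realization of
`gr_υ(R)` and `(B, ψ)` a realization of `gr_υ(D)`, there is an injective (degree
preserving) ring homomorphism `Λ : A → B` with `Λ (φ g x) = ψ g (ι x)`, which exhibits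
`B` as the Ore localization of `A` at `H`: every element of `B` is a left fraction of
elements of `Λ(A)` with homogeneous denominator. -/
theorem localized_graded_of_ore_domain_iso_graded_of_fractions
    (R : Type) [Ring R] [IsDomain R]
    (hOre : ∀ a b : R, b ≠ 0 → ∃ c d : R, d ≠ 0 ∧ d * a = c * b)
    (G : Type) [Group G] [LinearOrder G]
    [CovariantClass G G (· * ·) (· < ·)]
    [CovariantClass G G (Function.swap (· * ·)) (· < ·)]
    -- the valuation on `R` (restricted to nonzero elements)
    (υR : R → G)
    (haddR : ∀ x y : R, x ≠ 0 → y ≠ 0 → x + y ≠ 0 → min (υR x) (υR y) ≤ υR (x + y))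
    (hmulR : ∀ x y : R, x ≠ 0 → y ≠ 0 → υR (x * y) = υR x * υR y)
    -- `D`, the Ore division ring of fractions of `R`
    (D : Type) [DivisionRing D] (ι : R →+* D)
    (hinj : Function.Injective ι)
    (hfrac : ∀ d : D, ∃ r s : R, s ≠ 0 ∧ ι s * d = ι r)
    -- the extended valuation on `D`
    (υD : D → G)
    (haddD : ∀ x y : D, x ≠ 0 → y ≠ 0 → x + y ≠ 0 → min (υD x) (υD y) ≤ υD (x + y))
    (hmulD : ∀ x y : D, x ≠ 0 → y ≠ 0 → υD (x * y) = υD x * υD y)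
    (hext : ∀ x : R, x ≠ 0 → υD (ι x) = υR x)
    -- realizations of the associated graded rings of `R` and of `D`
    (A : Type) [Ring A] (φ : G → R → A)
    (hA : IsAssociatedGradedRing R G (fun g => {x : R | x = 0 ∨ g ≤ υR x}) A φ)
    (B : Type) [Ring B] (ψ : G → D → B)
    (hB : IsAssociatedGradedRing D G (fun g => {x : D | x = 0 ∨ g ≤ υD x}) B ψ) :
    ∃ Λ : A →+* B,
      Function.Injective Λ ∧
      -- `Λ` is the degree-preserving map `f + R_{>υ f} ↦ f + D_{>υ f}`
      (∀ (g : G) (x : R), (x = 0 ∨ g ≤ υR x) → Λ (φ g x) = ψ g (ι x)) ∧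
      -- `B` is the Ore localization of `A` at the nonzero homogeneous elements
      (∀ b : B, ∃ h a : A, h ≠ 0 ∧
        (∃ g : G, ∃ x : R, (x = 0 ∨ g ≤ υR x) ∧ h = φ g x) ∧
        Λ h * b = Λ a) :=
  localized_graded_of_ore_domain_iso_graded_of_fractions_general R hOre G υR D ι hinj hfrac υD haddD
    hmulD hext A φ hA B ψ hB
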